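/- Let a₁ > 0 and r₁(i) = a₁/(i+1). Then for sufficiently large k < i (with r₁(l) ≤ 1 for l ≥ k+1), Π_{l=k+1}^{i−1}(1 − a₁/(l+1)) ≤ (k+2)^{a₁} / (i+1)^{a₁}. -/

import Mathlib

/-! Bounding each factor by `1 - x ≤ exp (-x)` turns the product into `exp (-a₁ ∑ 1/(l+1))`,
and the harmonic-type sum over `[k+1, i)` is at least `log ((i+1)/(k+2))` because
`log (1 + 1/x) ≤ 1/x`. Taking `k ≥ a₁` makes every factor nonnegative. -/

open Finset Real

theorem prod_one_sub_le_exp_neg_sum {ι : Type*} (s : Finset ι) (f : ι → ℝ)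
    (hf : ∀ i ∈ s, f i ≤ 1) : ∏ i ∈ s, (1 - f i) ≤ exp (-∑ i ∈ s, f i) := by
  rw [← sum_neg_distrib, exp_sum]
  exact prod_le_prod (fun i hi => sub_nonneg.2 (hf i hi)) fun i _ => one_sub_le_exp_neg _

theorem log_succ_div_le_inv {x : ℝ} (hx : 0 < x) : log ((x + 1) / x) ≤ 1 / x :=
  calc log ((x + 1) / x) ≤ (x + 1) / x - 1 := log_le_sub_one_of_pos (by positivity)
    _ = 1 / x := by field_simp; ring

theorem log_div_le_sum_Ico_inv {m n : ℕ} (hmn : m ≤ n) :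
    log (((n : ℝ) + 1) / ((m : ℝ) + 1)) ≤ ∑ l ∈ Ico m n, 1 / ((l : ℝ) + 1) := by
  induction n, hmn using Nat.le_induction with
  | base => simp
  | succ n hmn ih =>
    have hn : (0 : ℝ) < (n : ℝ) + 1 := by positivity
    have hsplit : (((n + 1 : ℕ) : ℝ) + 1) / ((m : ℝ) + 1)
        = ((n : ℝ) + 1) / ((m : ℝ) + 1) * (((n : ℝ) + 1 + 1) / ((n : ℝ) + 1)) := by
      push_cast; field_simp
    rw [sum_Ico_succ_top hmn, hsplit, log_mul (by positivity) (by positivity)]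
    exact add_le_add ih (log_succ_div_le_inv hn)

theorem exp_neg_mul_log_div {x y : ℝ} (hx : 0 < x) (hy : 0 < y) (a : ℝ) :
    exp (-a * log (x / y)) = y ^ a / x ^ a := by
  rw [mul_comm, ← rpow_def_of_pos (div_pos hx hy), rpow_neg (div_pos hx hy).le,
    ← inv_rpow (div_pos hx hy).le, inv_div, div_rpow hy.le hx.le]

/-- The `δ₁ = 1` case of the product estimate in Lemma `prop_alpha`: for sufficiently
large `k < i`, `∏_{l=k+1}^{i−1}(1 − a₁/(l+1)) ≤ (k+2)^{a₁} / (i+1)^{a₁}`. -/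
theorem product_decay_bound_delta_one (a₁ : ℝ) (ha₁ : 0 < a₁) :
    ∃ j₀ : ℕ, ∀ k i : ℕ, j₀ ≤ k → k < i →
      ∏ l ∈ Finset.Ico (k + 1) i, (1 - a₁ / ((l : ℝ) + 1)) ≤
        ((k : ℝ) + 2) ^ a₁ / ((i : ℝ) + 1) ^ a₁ := by
  refine ⟨⌈a₁⌉₊, fun k i hk hki => ?_⟩
  have hfactor : ∀ l ∈ Ico (k + 1) i, a₁ / ((l : ℝ) + 1) ≤ 1 := fun l hl => by
    have hkl : (k : ℝ) + 1 ≤ l := by exact_mod_cast (mem_Ico.1 hl).1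
    rw [div_le_one (by positivity)]
    linarith [Nat.ceil_le.1 hk]
  have hlog : log (((i : ℝ) + 1) / ((k : ℝ) + 2))
      ≤ ∑ l ∈ Ico (k + 1) i, 1 / ((l : ℝ) + 1) := by
    simpa [add_assoc, one_add_one_eq_two] using log_div_le_sum_Ico_inv hki
  calc ∏ l ∈ Ico (k + 1) i, (1 - a₁ / ((l : ℝ) + 1))
      ≤ exp (-∑ l ∈ Ico (k + 1) i, a₁ / ((l : ℝ) + 1)) :=
        prod_one_sub_le_exp_neg_sum _ _ hfactor
    _ = exp (-a₁ * ∑ l ∈ Ico (k + 1) i, 1 / ((l : ℝ) + 1)) := by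
        rw [neg_mul, mul_sum]
        simp only [mul_one_div]
    _ ≤ exp (-a₁ * log (((i : ℝ) + 1) / ((k : ℝ) + 2))) :=
        exp_le_exp.2 (mul_le_mul_of_nonpos_left hlog (by linarith))
    _ = ((k : ℝ) + 2) ^ a₁ / ((i : ℝ) + 1) ^ a₁ :=
        exp_neg_mul_log_div (by positivity) (by positivity) a₁
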